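/- Let m > 1 and n ≥ 1 be integers. Then the double product ∏_{i=1}^{m-1} ∏_{j=1}^{n} (2 cos(i π / m) + 2 cos(2 j π / n)) equals m if n is odd and gcd(m,n) = 1; equals (-1)^(m-1) · m^2 if n is even and gcd(m, n/2) = 1; and equals 0 otherwise. -/

import Mathlib

/-!
Writing `2 cos x = z + z⁻¹` with `z` on the unit circle, the inner product over the `n`-th roots
of unity `ζ ^ j` factors as `u⁻ⁿ ∏ (u + ζ ^ j) ∏ (u + ζ ^ (-j)) = u⁻ⁿ (uⁿ - (-1)ⁿ)²`, so it equals
`2 cos (n θ) - 2 (-1)ⁿ`. With `θ = i π / m` the outer factors become `2 ± (w ^ i + w ^ (-i))`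
for a root of unity `w`, and the outer product reduces to `∏_{0 < k < N} (1 - w ^ k) = N`
for a primitive `N`-th root of unity `w`. A common divisor `d ≥ 2` of `m` and `n` (resp. `n / 2`)
produces the vanishing factor `i = m / d`.
-/

open Finset Real Polynomial

theorem Finset.prod_Icc_one_eq_prod_range {M : Type*} [CommMonoid M] (f : ℕ → M) (N : ℕ) :
    ∏ i ∈ Icc 1 N, f i = ∏ k ∈ range N, f (k + 1) := by
  rw [← Ico_add_one_right_eq_Icc, prod_Ico_eq_prod_range]
  simp [add_comm]

theorem Complex.two_cos_eq_add_inv {x z : ℂ} (hz : exp (x * I) = z) : 2 * cos x = z + z⁻¹ := by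
  rw [two_cos, neg_mul, exp_neg, hz]

namespace IsPrimitiveRoot

variable {K : Type*} [Field K] {n : ℕ} {ζ : K}

theorem prod_Icc_add_pow (hζ : IsPrimitiveRoot ζ n) (hn : 0 < n) (x : K) :
    ∏ j ∈ Icc 1 n, (x + ζ ^ j) = x ^ n - (-1) ^ n := by
  have := congrArg (eval x) <|
    X_pow_sub_C_eq_prod hζ hn (α := -ζ) (by rw [neg_pow, hζ.pow_eq_one, mul_one])
  simp only [eval_sub, eval_pow, eval_X, eval_C, eval_prod] at this
  rw [this, prod_Icc_one_eq_prod_range]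
  exact prod_congr rfl fun k _ => by ring

theorem prod_Icc_add_inv_add_pow_add_inv (hζ : IsPrimitiveRoot ζ n) (hn : 0 < n) {u : K}
    (hu : u ≠ 0) :
    ∏ j ∈ Icc 1 n, (u + u⁻¹ + (ζ ^ j + (ζ ^ j)⁻¹)) = u ^ n + (u ^ n)⁻¹ - 2 * (-1) ^ n := by
  have hfactor (j : ℕ) :
      u + u⁻¹ + (ζ ^ j + (ζ ^ j)⁻¹) = u⁻¹ * ((u + ζ ^ j) * (u + ζ⁻¹ ^ j)) := by
    have : ζ ^ j ≠ 0 := pow_ne_zero j (hζ.ne_zero hn.ne')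
    rw [inv_pow]
    field_simp
    ring
  rw [prod_congr rfl fun j _ => hfactor j, prod_mul_distrib, prod_mul_distrib, prod_const,
    Nat.card_Icc, Nat.add_sub_cancel, hζ.prod_Icc_add_pow hn, hζ.inv.prod_Icc_add_pow hn, inv_pow]
  have hsq : ((-1 : K) ^ n) ^ 2 = 1 := by rw [← pow_mul, pow_mul']; simp
  have : u ^ n ≠ 0 := pow_ne_zero n hu
  field_simp
  linear_combination hsq

theorem prod_Icc_two_sub_pow_sub_inv (hn : 0 < n) (hζ : IsPrimitiveRoot ζ n) :
    ∏ i ∈ Icc 1 (n - 1), (2 - ζ ^ i - (ζ ^ i)⁻¹) = n ^ 2 := by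
  obtain ⟨N, rfl⟩ : ∃ N, n = N + 1 := ⟨n - 1, by omega⟩
  have hfactor (i : ℕ) : 2 - ζ ^ i - (ζ ^ i)⁻¹ = (1 - ζ ^ i) * (1 - ζ⁻¹ ^ i) := by
    have : ζ ^ i ≠ 0 := pow_ne_zero i (hζ.ne_zero N.succ_ne_zero)
    rw [inv_pow]
    field_simp
    ring
  rw [Nat.add_sub_cancel, prod_Icc_one_eq_prod_range]
  simp only [hfactor, prod_mul_distrib]
  rw [hζ.prod_one_sub_pow_eq_order, hζ.inv.prod_one_sub_pow_eq_order]
  push_cast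
  ring

/-- Since `ζ ^ m = -1`, the factors `1 + ζ ^ i` and `1 + ζ ^ (-i)` are the factors `1 - ζ ^ k`,
`0 < k < 2m`, of `∏ (1 - ζ ^ k) = 2m` other than `1 - ζ ^ m = 2`. -/
theorem prod_Icc_two_add_pow_add_inv {m : ℕ} (hm : 0 < m) (hζ : IsPrimitiveRoot ζ (2 * m)) :
    ∏ i ∈ Icc 1 (m - 1), (2 + ζ ^ i + (ζ ^ i)⁻¹) = m := by
  obtain ⟨M, rfl⟩ : ∃ M, m = M + 1 := ⟨m - 1, by omega⟩
  have hζ0 : ζ ≠ 0 := hζ.ne_zero (by omega)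
  have hhalf : ζ ^ (M + 1) = -1 := (hζ.pow (by omega) (mul_comm _ _)).eq_neg_one_of_two_right
  have hall := (show IsPrimitiveRoot ζ (M + (M + 1) + 1) by convert hζ using 1; ring)
    |>.prod_one_sub_pow_eq_order
  rw [prod_range_add, prod_range_succ', hhalf] at hall
  have hfactor (i : ℕ) : 2 + ζ ^ i + (ζ ^ i)⁻¹ = (1 + ζ ^ i) * (1 + ζ⁻¹ ^ i) := by
    have : ζ ^ i ≠ 0 := pow_ne_zero i hζ0
    rw [inv_pow]
    field_simp
    ring
  have hupper (k : ℕ) : 1 + ζ ^ (k + 1) = 1 - ζ ^ (M + (k + 1) + 1) := by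
    rw [show M + (k + 1) + 1 = (M + 1) + (k + 1) by ring, pow_add ζ (M + 1), hhalf]
    ring
  have hlower : ∏ k ∈ range M, (1 + ζ⁻¹ ^ (k + 1)) = ∏ k ∈ range M, (1 - ζ ^ (k + 1)) := by
    rw [← prod_range_reflect]
    refine prod_congr rfl fun k hk => ?_
    have hk : k < M := mem_range.mp hk
    have : ζ ^ (M - k) * ζ ^ (k + 1) = -1 := by
      rw [← pow_add, show M - k + (k + 1) = M + 1 by omega, hhalf]
    rw [show M - 1 - k + 1 = M - k by omega, inv_pow]
    field_simp
    linear_combination this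
  simp only [Nat.add_sub_cancel, prod_Icc_one_eq_prod_range, hfactor, prod_mul_distrib, hupper,
    hlower]
  have h2 : (2 : K) ≠ 0 := by
    have := hζ.neZero'.out
    push_cast at this
    exact left_ne_zero_of_mul this
  refine mul_right_cancel₀ h2 ?_
  push_cast at hall ⊢
  linear_combination hall

end IsPrimitiveRoot

theorem prod_two_cos_add_two_cos {n : ℕ} (hn : 0 < n) (θ : ℝ) :
    ∏ j ∈ Icc 1 n, (2 * cos θ + 2 * cos (2 * j * π / n)) = 2 * cos (n * θ) - 2 * (-1) ^ n := by
  set ζ := Complex.exp (2 * π * Complex.I / n)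
  set u := Complex.exp (θ * Complex.I)
  have hζ : IsPrimitiveRoot ζ n := Complex.isPrimitiveRoot_exp n hn.ne'
  have hroot (j : ℕ) : 2 * Complex.cos (2 * j * π / n) = ζ ^ j + (ζ ^ j)⁻¹ :=
    Complex.two_cos_eq_add_inv <| by rw [← Complex.exp_nat_mul]; ring_nf
  have hθ : 2 * Complex.cos θ = u + u⁻¹ := Complex.two_cos_eq_add_inv rfl
  have hnθ : 2 * Complex.cos (n * θ) = u ^ n + (u ^ n)⁻¹ :=
    Complex.two_cos_eq_add_inv <| by rw [← Complex.exp_nat_mul]; ring_nf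
  apply Complex.ofReal_injective
  push_cast
  simp only [hroot, hθ, hnθ]
  exact hζ.prod_Icc_add_inv_add_pow_add_inv hn (Complex.exp_ne_zero _)

theorem prod_two_cos_sub_of_even {m n : ℕ} (hm : 0 < m) (hn : Even n)
    (hco : Nat.Coprime (n / 2) m) :
    ∏ i ∈ Icc 1 (m - 1), (2 * cos (n * (i * π / m)) - 2 * (-1) ^ n) = (-1) ^ (m - 1) * m ^ 2 := by
  obtain ⟨s, rfl⟩ := hn
  rw [← two_mul, Nat.mul_div_cancel_left s two_pos] at hco
  set ζ := Complex.exp (2 * π * Complex.I * (s / m))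
  have hζ : IsPrimitiveRoot ζ m := Complex.isPrimitiveRoot_exp_of_coprime s m hm.ne' hco
  have hfactor (i : ℕ) : 2 * Complex.cos ((s + s) * (i * π / m)) - 2 * (-1) ^ (s + s) =
      -(2 - ζ ^ i - (ζ ^ i)⁻¹) := by
    rw [Complex.two_cos_eq_add_inv (z := ζ ^ i), Even.neg_one_pow ⟨s, rfl⟩]
    · ring
    · rw [← Complex.exp_nat_mul]; ring_nf
  apply Complex.ofReal_injective
  push_cast
  simp only [hfactor]
  rw [prod_neg, hζ.prod_Icc_two_sub_pow_sub_inv hm, Nat.card_Icc, Nat.add_sub_cancel]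

theorem prod_two_cos_sub_of_odd {m n : ℕ} (hm : 0 < m) (hn : Odd n) (hco : Nat.Coprime n m) :
    ∏ i ∈ Icc 1 (m - 1), (2 * cos (n * (i * π / m)) - 2 * (-1) ^ n) = m := by
  set ζ := Complex.exp (2 * π * Complex.I * (n / (2 * m : ℕ)))
  have hζ : IsPrimitiveRoot ζ (2 * m) := Complex.isPrimitiveRoot_exp_of_coprime n (2 * m)
    (by omega) (Nat.Coprime.mul_right hn.coprime_two_right hco)
  have hfactor (i : ℕ) : 2 * Complex.cos (n * (i * π / m)) - 2 * (-1) ^ n =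
      2 + ζ ^ i + (ζ ^ i)⁻¹ := by
    rw [Complex.two_cos_eq_add_inv (z := ζ ^ i), hn.neg_one_pow]
    · ring
    · rw [← Complex.exp_nat_mul]
      push_cast
      field_simp
  apply Complex.ofReal_injective
  push_cast
  simp only [hfactor]
  exact hζ.prod_Icc_two_add_pow_add_inv hm

theorem prod_two_cos_sub_eq_zero {m n d k : ℕ} (hm : 0 < m) (hd : 2 ≤ d) (hdm : d ∣ m)
    (hk : n = d * k) (hpar : Even k ↔ Even n) :
    ∏ i ∈ Icc 1 (m - 1), (2 * cos (n * (i * π / m)) - 2 * (-1) ^ n) = 0 := by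
  obtain ⟨a, rfl⟩ := hdm
  have ha : 0 < a := Nat.pos_of_mul_pos_left hm
  refine prod_eq_zero (i := a) (mem_Icc.mpr ⟨ha, ?_⟩) ?_
  · have : 2 * a ≤ d * a := Nat.mul_le_mul_right a hd
    omega
  · have harg : (n : ℝ) * (a * π / (d * a : ℕ)) = k * π := by
      rw [hk]; push_cast; field_simp
    rw [harg, cos_nat_mul_pi, neg_one_pow_congr hpar, sub_self]

theorem exists_vanishing_divisor {m n : ℕ} (hm : 0 < m) (hodd : ¬(Odd n ∧ m.gcd n = 1))
    (heven : ¬(Even n ∧ m.gcd (n / 2) = 1)) :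
    ∃ d k, 2 ≤ d ∧ d ∣ m ∧ n = d * k ∧ (Even k ↔ Even n) := by
  rcases Nat.even_or_odd n with hn | hn
  · obtain ⟨s, rfl⟩ := hn
    have hg : m.gcd s ≠ 1 := by simpa [← two_mul] using heven
    have hpos : 0 < m.gcd s := Nat.gcd_pos_of_pos_left s hm
    obtain ⟨t, ht⟩ := Nat.gcd_dvd_right m s
    refine ⟨m.gcd s, 2 * t, by omega, Nat.gcd_dvd_left m s, by lia, ?_⟩
    simp [← two_mul]
  · have hg : m.gcd n ≠ 1 := fun h => hodd ⟨hn, h⟩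
    have hpos : 0 < m.gcd n := Nat.gcd_pos_of_pos_left n hm
    obtain ⟨k, hk⟩ := Nat.gcd_dvd_right m n
    have hkodd : Odd k := (Nat.odd_mul.mp (hk ▸ hn)).2
    refine ⟨m.gcd n, k, by omega, Nat.gcd_dvd_left m n, hk, ?_⟩
    exact iff_of_false (Nat.not_even_iff_odd.mpr hkodd) (Nat.not_even_iff_odd.mpr hn)

theorem prod_cylinder_eigenvalues (m n : ℕ) (hm : 1 < m) (hn : 1 ≤ n) :
    (∏ i ∈ Finset.Icc 1 (m - 1), ∏ j ∈ Finset.Icc 1 n,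
        (2 * Real.cos (i * π / m) + 2 * Real.cos (2 * j * π / n))) =
      if Odd n ∧ Nat.gcd m n = 1 then (m : ℝ)
      else if Even n ∧ Nat.gcd m (n / 2) = 1 then (-1 : ℝ) ^ (m - 1) * (m : ℝ) ^ 2
      else 0 := by
  simp only [prod_two_cos_add_two_cos hn]
  split_ifs with hodd heven
  · exact prod_two_cos_sub_of_odd (by omega) hodd.1 (Nat.coprime_comm.mp hodd.2)
  · exact prod_two_cos_sub_of_even (by omega) heven.1 (Nat.coprime_comm.mp heven.2)
  · obtain ⟨d, k, hd, hdm, hk, hpar⟩ := exists_vanishing_divisor (by omega) hodd heven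
    exact prod_two_cos_sub_eq_zero (by omega) hd hdm hk hpar
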